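/- arXiv:2111.07335 — 6 statements merged into one kernel-verified Lean document; each statement's English description precedes it below -/
import Mathlib

section
/- Let r₀, n be natural numbers, a ∈ ℤ, and γ, t₀ ≥ 0 be real numbers. Let t : ℤ × ℤ → ℝ satisfy: t(j,k) ≥ 0 for all j,k; t(j,k) = 0 whenever |j − k| > r₀; and Σ_k t(j,k)·(|k − j| + 1)² ≤ t₀ for every j ∈ ℤ (the sum is finite by the support condition). Let θ : ℤ → ℝ satisfy |θ(j) − θ(k)| ≤ γ·|j − k| for all j, k ∈ ℤ, θ(j) = θ(a) for all j ≤ a, and θ(j) = θ(a + n) for all j ≥ a + n. Then the (well-defined, finitely supported) double sum satisfies Σ_{j,k ∈ ℤ} t(j,k)·(θ(j) − θ(k))² ≤ t₀·γ²·(n + 2r₀). -/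
/-- Summation estimate behind the Lieb–Schultz–Mattis variational bound.
For nonnegative hopping amplitudes `t` of range `r₀` with summability constant `t₀`, and a
`γ`-Lipschitz twist profile `θ` that is constant on `(-∞, a]` and on `[a + n, ∞)`, the double
sum `Σ_{j,k} t(j,k) (θ j - θ k)²` is bounded by `t₀ γ² (n + 2 r₀)`. -/
theorem twist_double_sum_bound
    (r₀ n : ℕ) (a : ℤ) (γ t₀ : ℝ) (hγ : 0 ≤ γ) (ht₀ : 0 ≤ t₀)
    (t : ℤ × ℤ → ℝ)
    (ht_nonneg : ∀ j k : ℤ, 0 ≤ t (j, k))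
    (ht_range : ∀ j k : ℤ, (r₀ : ℤ) < |j - k| → t (j, k) = 0)
    (ht_sum : ∀ j : ℤ, ∑ᶠ k : ℤ, t (j, k) * ((|k - j| : ℤ) + 1 : ℝ) ^ 2 ≤ t₀)
    (θ : ℤ → ℝ)
    (hθ_lip : ∀ j k : ℤ, |θ j - θ k| ≤ γ * ((|j - k| : ℤ) : ℝ))
    (hθ_left : ∀ j : ℤ, j ≤ a → θ j = θ a)
    (hθ_right : ∀ j : ℤ, a + n ≤ j → θ j = θ (a + n)) :
    ∑ᶠ j : ℤ, ∑ᶠ k : ℤ, t (j, k) * (θ j - θ k) ^ 2 ≤ t₀ * γ ^ 2 * (n + 2 * r₀) := by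
  -- range of t in terms of membership in an interval
  have hrange' : ∀ j k : ℤ, t (j, k) ≠ 0 → j - r₀ ≤ k ∧ k ≤ j + r₀ := by
    intro j k h
    by_contra hc
    push_neg at hc
    apply h
    apply ht_range
    rcases abs_cases (j - k) with ⟨h1, h2⟩ | ⟨h1, h2⟩ <;> omega
  -- inner sum support
  have key : ∀ j : ℤ, ∀ g : ℤ → ℝ,
      Function.support (fun k => t (j, k) * g k) ⊆
        (Finset.Icc (j - r₀) (j + r₀) : Finset ℤ) := by
    intro j g k hk
    simp only [Function.mem_support] at hk
    have ht : t (j, k) ≠ 0 := fun h => hk (by simp [h])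
    have := hrange' j k ht
    simp [Finset.mem_Icc, this]
  -- bound on the inner sum
  have inner_bound : ∀ j : ℤ, (∑ᶠ k : ℤ, t (j, k) * (θ j - θ k) ^ 2) ≤ t₀ * γ ^ 2 := by
    intro j
    set s : Finset ℤ := Finset.Icc (j - r₀) (j + r₀) with hs
    have h1 : (∑ᶠ k : ℤ, t (j, k) * (θ j - θ k) ^ 2)
        = ∑ k ∈ s, t (j, k) * (θ j - θ k) ^ 2 :=
      finsum_eq_finset_sum_of_support_subset _ (key j _)
    have h2 : (∑ᶠ k : ℤ, t (j, k) * ((|k - j| : ℤ) + 1 : ℝ) ^ 2)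
        = ∑ k ∈ s, t (j, k) * ((|k - j| : ℤ) + 1 : ℝ) ^ 2 :=
      finsum_eq_finset_sum_of_support_subset _ (key j _)
    rw [h1]
    have term : ∀ k ∈ s, t (j, k) * (θ j - θ k) ^ 2
        ≤ t (j, k) * ((|k - j| : ℤ) + 1 : ℝ) ^ 2 * γ ^ 2 := by
      intro k _
      have hlip := hθ_lip j k
      have habs : |j - k| = |k - j| := abs_sub_comm j k
      have h3 : (θ j - θ k) ^ 2 ≤ (γ * ((|k - j| : ℤ) : ℝ)) ^ 2 := by
        rw [← sq_abs (θ j - θ k)]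
        apply pow_le_pow_left₀ (abs_nonneg _)
        rw [← habs]; exact hlip
      have h4 : (γ * ((|k - j| : ℤ) : ℝ)) ^ 2 ≤ ((|k - j| : ℤ) + 1 : ℝ) ^ 2 * γ ^ 2 := by
        have hke : ((|k - j| : ℤ) : ℝ) ≤ ((|k - j| : ℤ) : ℝ) + 1 := by linarith
        have hnn : (0 : ℝ) ≤ ((|k - j| : ℤ) : ℝ) := by positivity
        have := mul_le_mul_of_nonneg_left hke hγ
        calc (γ * ((|k - j| : ℤ) : ℝ)) ^ 2 = γ ^ 2 * ((|k - j| : ℤ) : ℝ) ^ 2 := by ring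
          _ ≤ γ ^ 2 * (((|k - j| : ℤ) : ℝ) + 1) ^ 2 := by
              apply mul_le_mul_of_nonneg_left _ (by positivity)
              apply pow_le_pow_left₀ hnn (by linarith)
          _ = ((|k - j| : ℤ) + 1 : ℝ) ^ 2 * γ ^ 2 := by push_cast; ring
      calc t (j, k) * (θ j - θ k) ^ 2 ≤ t (j, k) * (((|k - j| : ℤ) + 1 : ℝ) ^ 2 * γ ^ 2) := by
            apply mul_le_mul_of_nonneg_left _ (ht_nonneg j k)
            exact h3.trans h4
        _ = t (j, k) * ((|k - j| : ℤ) + 1 : ℝ) ^ 2 * γ ^ 2 := by ring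
    calc ∑ k ∈ s, t (j, k) * (θ j - θ k) ^ 2
        ≤ ∑ k ∈ s, t (j, k) * ((|k - j| : ℤ) + 1 : ℝ) ^ 2 * γ ^ 2 :=
          Finset.sum_le_sum term
      _ = (∑ k ∈ s, t (j, k) * ((|k - j| : ℤ) + 1 : ℝ) ^ 2) * γ ^ 2 := by
          rw [Finset.sum_mul]
      _ ≤ t₀ * γ ^ 2 := by
          apply mul_le_mul_of_nonneg_right _ (by positivity)
          rw [← h2]; exact ht_sum j
  -- outer support
  set S : Finset ℤ := Finset.Ioo (a - r₀) (a + n + r₀) with hS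
  have outer_supp : Function.support (fun j => ∑ᶠ k : ℤ, t (j, k) * (θ j - θ k) ^ 2)
      ⊆ (S : Set ℤ) := by
    intro j hj
    simp only [Function.mem_support] at hj
    by_contra hjS
    apply hj
    have hj' : j ≤ a - r₀ ∨ a + n + r₀ ≤ j := by
      simp only [hS, Finset.coe_Ioo, Set.mem_Ioo] at hjS
      omega
    have : ∀ k : ℤ, t (j, k) * (θ j - θ k) ^ 2 = 0 := by
      intro k
      by_cases ht : t (j, k) = 0
      · simp [ht]
      · have hk := hrange' j k ht
        have : θ j = θ k := by
          rcases hj' with h | h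
          · rw [hθ_left j (by omega), hθ_left k (by omega)]
          · rw [hθ_right j (by omega), hθ_right k (by omega)]
        simp [this]
    simp only [this]
    exact finsum_zero
  have houter : (∑ᶠ j : ℤ, ∑ᶠ k : ℤ, t (j, k) * (θ j - θ k) ^ 2)
      = ∑ j ∈ S, ∑ᶠ k : ℤ, t (j, k) * (θ j - θ k) ^ 2 :=
    finsum_eq_finset_sum_of_support_subset _ outer_supp
  rw [houter]
  have hcard : (S.card : ℝ) ≤ (n : ℝ) + 2 * r₀ := by
    have : S.card = (a + n + r₀ - (a - r₀) - 1).toNat := Int.card_Ioo _ _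
    have hc : S.card ≤ n + 2 * r₀ := by omega
    calc (S.card : ℝ) ≤ ((n + 2 * r₀ : ℕ) : ℝ) := by exact_mod_cast hc
      _ = (n : ℝ) + 2 * r₀ := by push_cast; ring
  calc ∑ j ∈ S, ∑ᶠ k : ℤ, t (j, k) * (θ j - θ k) ^ 2
      ≤ ∑ _j ∈ S, t₀ * γ ^ 2 := Finset.sum_le_sum fun j _ => inner_bound j
    _ = (S.card : ℝ) * (t₀ * γ ^ 2) := by rw [Finset.sum_const, nsmul_eq_mul]
    _ ≤ ((n : ℝ) + 2 * r₀) * (t₀ * γ ^ 2) := by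
        apply mul_le_mul_of_nonneg_right hcard (by positivity)
    _ = t₀ * γ ^ 2 * (n + 2 * r₀) := by ring
end

section
/- Let A be a unital C*-algebra, φ : A → ℂ a state, and Γ : A → A a star-algebra automorphism with φ(Γ(a)) = φ(a) for all a. Let u ∈ A be unitary with Γ(u) = u*. Let h ∈ A be self-adjoint with Γ(h) = h and h = h₀ + Σ_{m=1}^{M} (T_m + T_m*), where h₀ commutes with u and u T_m u* = e^{iφ_m}·T_m with φ_m ∈ ℝ. Let ε > 0 satisfy the 'gap' condition: for every v ∈ A with φ(v) = 0, one has Re φ(v*·(h v − v h)) ≥ ε·Re φ(v* v). If ε > Σ_{m=1}^{M} φ_m²·‖T_m‖, then φ(u) is real and φ(u) ≠ 0. -/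
open ComplexOrder

private lemma one_sub_cos_le_half_sq' (t : ℝ) : 1 - Real.cos t ≤ t ^ 2 / 2 := by
  have h1 := Real.sin_sq_le_sq (x := t / 2)
  have h2 := Real.cos_sq (t / 2)
  rw [show 2 * (t / 2) = t by ring] at h2
  have h3 := Real.sin_sq_add_cos_sq (t / 2)
  nlinarith

/-- Abstract form of Theorem 1 of the paper. For a `Γ`-invariant state
`φ` satisfying the gap condition with gap `ε`, a unitary `u` with `Γ u = u*`, and a
self-adjoint `Γ`-invariant `h = h₀ + Σ_m (T_m + T_m*)` as in the LSM estimate, if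
`ε > Σ_m φ_m² ‖T_m‖` then `φ u` is real and nonzero. -/
theorem abstract_index_nonzero
    {A : Type*} [NormedRing A] [StarRing A] [CStarRing A] [CompleteSpace A]
    [NormedAlgebra ℂ A] [StarModule ℂ A]
    (φ : A →ₗ[ℂ] ℂ) (hφ1 : φ 1 = 1) (hφpos : ∀ a : A, 0 ≤ φ (star a * a))
    (Γ : A ≃⋆ₐ[ℂ] A) (hinv : ∀ a : A, φ (Γ a) = φ a)
    (u : A) (hu₁ : star u * u = 1) (hu₂ : u * star u = 1) (hΓu : Γ u = star u)
    (M : ℕ) (h h₀ : A) (T : Fin M → A) (φm : Fin M → ℝ)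
    (hsa : star h = h) (hΓh : Γ h = h)
    (hdec : h = h₀ + ∑ m : Fin M, (T m + star (T m)))
    (hcomm : h₀ * u = u * h₀)
    (hT : ∀ m : Fin M, u * T m * star u = Complex.exp (Complex.I * (φm m)) • T m)
    (ε : ℝ) (hε : 0 < ε)
    (hgap : ∀ v : A, φ v = 0 →
      ε * (φ (star v * v)).re ≤ (φ (star v * (h * v - v * h))).re)
    (hlt : ∑ m : Fin M, (φm m) ^ 2 * ‖T m‖ < ε) :
    (φ u).im = 0 ∧ φ u ≠ 0 := by
  classical
  letI : CStarAlgebra A := ⟨⟩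
  letI := CStarAlgebra.spectralOrder A
  haveI := CStarAlgebra.spectralOrderedRing A
  -- ## Step 1: the state is hermitian
  have him : ∀ x : A, (φ (star x * x)).im = 0 := fun x => by
    have := hφpos x; rw [Complex.le_def] at this; simpa using this.2.symm
  have herm : ∀ a : A, φ (star a) = (starRingEnd ℂ) (φ a) := by
    intro a
    have ha := him a
    have e1 : (φ (star a)).im + (φ a).im = 0 := by
      have hh := him (a + 1)
      have hx : star (a + 1) * (a + 1) = star a * a + (star a + (a + 1)) := by
        rw [star_add, star_one]; noncomm_ring
      rw [hx, map_add, map_add, map_add, hφ1] at hh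
      simpa [ha] using hh
    have e2 : (φ (star a)).re - (φ a).re = 0 := by
      have hh := him (a + (Complex.I • 1))
      have hx : star (a + (Complex.I • 1)) * (a + (Complex.I • 1)) =
          star a * a + (Complex.I • star a + ((-Complex.I) • a + 1)) := by
        rw [star_add, star_smul, star_one]
        simp only [Complex.star_def, Complex.conj_I]
        simp only [add_mul, mul_add, smul_mul_assoc, mul_smul_comm, smul_smul, smul_add,
          one_mul, mul_one]
        rw [show Complex.I * -Complex.I = 1 by simp [Complex.I_mul_I], one_smul]
        abel
      rw [hx, map_add, map_add, map_add, map_smul, map_smul, hφ1] at hh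
      simp only [Complex.add_im, ha, smul_eq_mul, Complex.mul_im, Complex.I_re,
        Complex.I_im, Complex.neg_im, Complex.neg_re, Complex.one_im] at hh
      linarith
    refine Complex.ext ?_ ?_
    · simp only [Complex.conj_re]; linarith
    · simp only [Complex.conj_im]; linarith
  -- ## Step 2: positivity and the norm bound
  have hmono : ∀ a : A, 0 ≤ a → 0 ≤ φ a := by
    intro a ha
    rw [StarOrderedRing.nonneg_iff] at ha
    induction ha using AddSubmonoid.closure_induction with
    | mem x hx => obtain ⟨s, rfl⟩ := hx; exact hφpos s
    | zero => simp
    | add x y _ _ hx hy => rw [map_add]; exact add_nonneg hx hy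
  have halg : ∀ r : ℝ, φ (algebraMap ℝ A r) = (r : ℂ) := by
    intro r
    rw [Algebra.algebraMap_eq_smul_one, ← algebraMap_smul ℂ r (1 : A), map_smul, hφ1,
      smul_eq_mul, mul_one]; rfl
  have hbound : ∀ x : A, IsSelfAdjoint x → |(φ x).re| ≤ ‖x‖ := by
    intro x hx
    rw [abs_le]
    constructor
    · have h1 : (0 : A) ≤ x - (-(algebraMap ℝ A ‖x‖)) :=
        sub_nonneg.mpr hx.neg_algebraMap_norm_le_self
      have h2 := hmono _ h1
      rw [Complex.le_def] at h2
      have := h2.1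
      rw [sub_neg_eq_add, map_add, halg] at this
      simp only [Complex.zero_re, Complex.add_re, Complex.ofReal_re] at this
      linarith
    · have h1 : (0 : A) ≤ algebraMap ℝ A ‖x‖ - x :=
        sub_nonneg.mpr hx.le_algebraMap_norm_self
      have h2 := hmono _ h1
      rw [Complex.le_def] at h2
      have := h2.1
      rw [map_sub, halg] at this
      simp only [Complex.zero_re, Complex.sub_re, Complex.ofReal_re] at this
      linarith
  -- ## Step 3: φ u is real
  have φsu : φ (star u) = (starRingEnd ℂ) (φ u) := herm u
  have hreal : (starRingEnd ℂ) (φ u) = φ u := by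
    rw [← φsu, ← hΓu, hinv]
  have him_u : (φ u).im = 0 := Complex.conj_eq_iff_im.mp hreal
  refine ⟨him_u, ?_⟩
  set c : ℂ := φ u with hc
  -- ## Step 4: twisted conjugation identities
  set e : Fin M → ℂ := fun m => Complex.exp (Complex.I * (φm m)) with he
  set f : Fin M → ℂ := fun m => Complex.exp (-(Complex.I * (φm m))) with hf
  have hee : ∀ m, f m * e m = 1 := fun m => by
    rw [he, hf, ← Complex.exp_add]; simp
  have hconj : ∀ m, star (e m) = f m := fun m => by
    rw [he, hf, Complex.star_def, ← Complex.exp_conj]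
    congr 1
    simp [Complex.conj_ofReal]
  have h1 : ∀ m, star u * T m * u = f m • T m := by
    intro m
    have hh := congrArg (fun a => star u * a * u) (hT m)
    simp only [mul_smul_comm, smul_mul_assoc] at hh
    have hL : star u * (u * T m * star u) * u = T m := by
      calc star u * (u * T m * star u) * u = (star u * u) * T m * (star u * u) := by noncomm_ring
        _ = T m := by rw [hu₁]; simp
    rw [hL] at hh
    calc star u * T m * u = (f m * e m) • (star u * T m * u) := by rw [hee, one_smul]
      _ = f m • T m := by rw [mul_smul, ← hh]
  have h2 : ∀ m, u * star (T m) * star u = f m • star (T m) := by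
    intro m
    have hh := congrArg star (hT m)
    simp only [star_smul, star_mul, star_star, hconj] at hh
    rw [← mul_assoc] at hh
    rw [← hconj m]; exact hh
  have h3 : ∀ m, star u * star (T m) * u = e m • star (T m) := by
    intro m
    have hh := congrArg (fun a => star u * a * u) (h2 m)
    simp only [mul_smul_comm, smul_mul_assoc] at hh
    have hL : star u * (u * star (T m) * star u) * u = star (T m) := by
      calc star u * (u * star (T m) * star u) * u
          = (star u * u) * star (T m) * (star u * u) := by noncomm_ring
        _ = star (T m) := by rw [hu₁]; simp
    rw [hL] at hh
    calc star u * star (T m) * u = (e m * f m) • (star u * star (T m) * u) := by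
          rw [mul_comm, hee, one_smul]
      _ = e m • star (T m) := by rw [mul_smul, ← hh]
  -- ## Step 5: conjugated Hamiltonians
  have hA : u * h * star u = h₀ + ∑ m : Fin M, (e m • T m + f m • star (T m)) := by
    rw [hdec, mul_add, add_mul, Finset.mul_sum, Finset.sum_mul]
    congr 1
    · calc u * h₀ * star u = (h₀ * u) * star u := by rw [hcomm]
        _ = h₀ * (u * star u) := by rw [mul_assoc]
        _ = h₀ := by rw [hu₂, mul_one]
    · refine Finset.sum_congr rfl fun m _ => ?_
      rw [← hT m, ← h2 m]
      noncomm_ring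
  have hB : star u * h * u = h₀ + ∑ m : Fin M, (f m • T m + e m • star (T m)) := by
    rw [hdec, mul_add, add_mul, Finset.mul_sum, Finset.sum_mul]
    congr 1
    · calc star u * h₀ * u = star u * (h₀ * u) := by rw [mul_assoc]
        _ = star u * (u * h₀) := by rw [hcomm]
        _ = (star u * u) * h₀ := by rw [← mul_assoc]
        _ = h₀ := by rw [hu₁, one_mul]
    · refine Finset.sum_congr rfl fun m _ => ?_
      rw [← h1 m, ← h3 m]
      noncomm_ring
  have hD : φ (star u * h * u) = φ (u * h * star u) := by
    have hΓ : Γ (star u * h * u) = u * h * star u := by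
      rw [map_mul, map_mul, map_star, hΓu, hΓh, star_star]
    rw [← hΓ, hinv]
  -- ## Step 6: the energy difference
  set z : Fin M → ℂ := fun m => φ (T m) with hz
  have pA : φ (u * h * star u) =
      φ h₀ + ∑ m : Fin M, (e m * z m + f m * (starRingEnd ℂ) (z m)) := by
    rw [hA, map_add, map_sum]
    congr 1
    refine Finset.sum_congr rfl fun m _ => ?_
    rw [map_add, map_smul, map_smul, smul_eq_mul, smul_eq_mul, herm]
  have pB : φ (star u * h * u) =
      φ h₀ + ∑ m : Fin M, (f m * z m + e m * (starRingEnd ℂ) (z m)) := by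
    rw [hB, map_add, map_sum]
    congr 1
    refine Finset.sum_congr rfl fun m _ => ?_
    rw [map_add, map_smul, map_smul, smul_eq_mul, smul_eq_mul, herm]
  have ph : φ h = φ h₀ + ∑ m : Fin M, (z m + (starRingEnd ℂ) (z m)) := by
    conv_lhs => rw [hdec]
    rw [map_add, map_sum]
    congr 1
    refine Finset.sum_congr rfl fun m _ => ?_
    rw [map_add, herm]
  have hcos : ∀ m, e m + f m = 2 * (Real.cos (φm m) : ℂ) := by
    intro m
    simp only [he, hf]
    rw [Complex.ofReal_cos,
      show Complex.I * (φm m : ℂ) = (φm m : ℂ) * Complex.I from mul_comm _ _,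
      show -((φm m : ℂ) * Complex.I) = -(φm m : ℂ) * Complex.I by ring, ← Complex.two_cos]
  have hDval : φ (star u * h * u) - φ h =
      ∑ m : Fin M, ((Real.cos (φm m) - 1 : ℝ) : ℂ) * (z m + (starRingEnd ℂ) (z m)) := by
    have h2D : (2 : ℂ) * (φ (star u * h * u) - φ h) =
        (2 : ℂ) * ∑ m : Fin M, ((Real.cos (φm m) - 1 : ℝ) : ℂ) *
          (z m + (starRingEnd ℂ) (z m)) := by
      calc (2 : ℂ) * (φ (star u * h * u) - φ h)
          = (φ (star u * h * u) + φ (u * h * star u)) - 2 * φ h := by rw [hD]; ring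
        _ = (∑ m : Fin M, (f m * z m + e m * (starRingEnd ℂ) (z m))
              + ∑ m : Fin M, (e m * z m + f m * (starRingEnd ℂ) (z m)))
              - ∑ m : Fin M, 2 * (z m + (starRingEnd ℂ) (z m)) := by
            rw [pA, pB, ph, ← Finset.mul_sum]; ring
        _ = ∑ m : Fin M, ((f m * z m + e m * (starRingEnd ℂ) (z m))
              + (e m * z m + f m * (starRingEnd ℂ) (z m))
              - 2 * (z m + (starRingEnd ℂ) (z m))) := by
            rw [← Finset.sum_add_distrib, ← Finset.sum_sub_distrib]
        _ = ∑ m : Fin M, (2 : ℂ) * (((Real.cos (φm m) - 1 : ℝ) : ℂ) *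
              (z m + (starRingEnd ℂ) (z m))) := by
            refine Finset.sum_congr rfl fun m _ => ?_
            rw [Complex.ofReal_sub, Complex.ofReal_one]
            linear_combination (z m + (starRingEnd ℂ) (z m)) * (hcos m)
        _ = _ := (Finset.mul_sum _ _ _).symm
    exact mul_left_cancel₀ two_ne_zero h2D
  have hDre : (φ (star u * h * u) - φ h).re
      = ∑ m : Fin M, (Real.cos (φm m) - 1) * (2 * (z m).re) := by
    rw [hDval, Complex.re_sum]
    refine Finset.sum_congr rfl fun m _ => ?_
    rw [Complex.add_conj, ← Complex.ofReal_mul, Complex.ofReal_re]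
  have hDre_le : (φ (star u * h * u) - φ h).re ≤ ∑ m : Fin M, (φm m) ^ 2 * ‖T m‖ := by
    rw [hDre]
    refine Finset.sum_le_sum fun m _ => ?_
    have hzre : 2 * (z m).re = (φ (T m + star (T m))).re := by
      rw [map_add, herm, Complex.add_re, Complex.conj_re]; ring
    have hsa' : IsSelfAdjoint (T m + star (T m)) := by
      rw [IsSelfAdjoint, star_add, star_star]; exact add_comm _ _
    have hnorm : ‖T m + star (T m)‖ ≤ 2 * ‖T m‖ := by
      calc ‖T m + star (T m)‖ ≤ ‖T m‖ + ‖star (T m)‖ := norm_add_le _ _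
        _ = 2 * ‖T m‖ := by rw [norm_star]; ring
    have hcosb : |Real.cos (φm m) - 1| ≤ (φm m) ^ 2 / 2 := by
      rw [abs_sub_comm, abs_of_nonneg (by linarith [Real.cos_le_one (φm m)])]
      exact one_sub_cos_le_half_sq' _
    have hzb : |2 * (z m).re| ≤ 2 * ‖T m‖ := by
      rw [hzre]; exact le_trans (hbound _ hsa') hnorm
    calc (Real.cos (φm m) - 1) * (2 * (z m).re)
        ≤ |(Real.cos (φm m) - 1) * (2 * (z m).re)| := le_abs_self _
      _ = |Real.cos (φm m) - 1| * |2 * (z m).re| := abs_mul _ _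
      _ ≤ ((φm m) ^ 2 / 2) * (2 * ‖T m‖) :=
          mul_le_mul hcosb hzb (abs_nonneg _) (by positivity)
      _ = (φm m) ^ 2 * ‖T m‖ := by ring
  -- ## Step 7: the trial vector
  set v : A := u - c • 1 with hv
  have hv0 : φ v = 0 := by
    rw [hv, map_sub, map_smul, hφ1, smul_eq_mul, mul_one, ← hc, sub_self]
  have hsv : star v = star u - c • 1 := by
    rw [hv, star_sub, star_smul, star_one, Complex.star_def, hreal]
  have hvexp : star v * v = star u * u - c • u - c • star u + (c * c) • 1 := by
    rw [hsv, hv]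
    simp only [sub_mul, mul_sub, smul_mul_assoc, mul_smul_comm, smul_smul, smul_sub,
      smul_add, mul_one, one_mul]
    abel
  have hφvv : φ (star v * v) = 1 - c ^ 2 := by
    rw [hvexp, map_add, map_sub, map_sub, map_smul, map_smul, map_smul, hu₁, hφ1, φsu,
      hreal, ← hc]
    simp only [smul_eq_mul, mul_one]
    ring
  have hvvre : (φ (star v * v)).re = 1 - c.re ^ 2 := by
    rw [hφvv, pow_two, pow_two]
    simp [Complex.sub_re, Complex.mul_re, him_u]
  have hcommv : h * v - v * h = h * u - u * h := by
    rw [hv]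
    simp only [mul_sub, sub_mul, mul_smul_comm, smul_mul_assoc, mul_one, one_mul]
    abel
  have hw : φ (u * h) = (starRingEnd ℂ) (φ (h * u)) := by
    have hΓ : Γ (u * h) = star u * h := by rw [map_mul, hΓu, hΓh]
    have hstar : star (h * u) = star u * h := by rw [star_mul, hsa]
    rw [← hinv (u * h), hΓ, ← hstar, herm]
  have hsvv : φ (star v * (h * u - u * h)) = (φ (star u * h * u) - φ h)
      - c * (φ (h * u) - (starRingEnd ℂ) (φ (h * u))) := by
    have e1 : star u * (h * u - u * h) = star u * h * u - h := by
      rw [mul_sub, ← mul_assoc, ← mul_assoc, hu₁, one_mul]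
    have e0 : star v * (h * u - u * h)
        = (star u * h * u - h) - c • (h * u - u * h) := by
      rw [hsv, sub_mul, smul_mul_assoc, one_mul, e1]
    rw [e0, map_sub, map_sub, map_smul, map_sub, hw, smul_eq_mul]
  have hre0 : (c * (φ (h * u) - (starRingEnd ℂ) (φ (h * u)))).re = 0 := by
    simp [Complex.mul_re, Complex.sub_re, Complex.sub_im, Complex.conj_re, Complex.conj_im,
      him_u]
  -- ## Step 8: conclusion via the gap condition
  have hgapv := hgap v hv0
  rw [hcommv, hsvv] at hgapv
  have hfinal : ε * (1 - c.re ^ 2) < ε * 1 := by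
    calc ε * (1 - c.re ^ 2) = ε * (φ (star v * v)).re := by rw [hvvre]
      _ ≤ ((φ (star u * h * u) - φ h)
            - c * (φ (h * u) - (starRingEnd ℂ) (φ (h * u)))).re := hgapv
      _ = (φ (star u * h * u) - φ h).re := by rw [Complex.sub_re, hre0, sub_zero]
      _ ≤ ∑ m : Fin M, (φm m) ^ 2 * ‖T m‖ := hDre_le
      _ < ε := hlt
      _ = ε * 1 := (mul_one ε).symm
  have h1c : 1 - c.re ^ 2 < 1 := (mul_lt_mul_iff_right₀ hε).mp hfinal
  intro h0
  rw [h0] at h1c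
  simp at h1c
end

section
/- Let A be a unital C*-algebra, u ∈ A a unitary element, and ε₀ > 0. For each s ∈ [0,1] let φ_s : A → ℂ be a state and h_s ∈ A an element such that: (i) for every v ∈ A with φ_s(v) = 0 one has Re φ_s(v*·(h_s v − v h_s)) ≥ ε₀·Re φ_s(v* v); (ii) φ_s(u) is real; (iii) Re φ_s(u*·(h_s u − u h_s)) < ε₀; and (iv) the map s ↦ φ_s(u) is continuous on [0,1]. Then φ_0(u)·φ_1(u) > 0, i.e., φ_0(u) and φ_1(u) are nonzero reals of the same sign. -/
open ComplexOrder

/-- Abstract form of Corollary 2 of the paper. Along a family of states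
`φ_s`, `s ∈ [0,1]`, each a gapped ground state of `h_s` with gap at least `ε₀`, such that
`φ_s(u)` is real, `Re φ_s(u* [h_s, u]) < ε₀`, and `s ↦ φ_s(u)` is continuous, the values
`φ_0(u)` and `φ_1(u)` are nonzero reals of the same sign. -/
theorem index_constant_along_path
    {A : Type*} [NormedRing A] [StarRing A] [CStarRing A] [CompleteSpace A]
    [NormedAlgebra ℂ A] [StarModule ℂ A]
    (u : A) (hu₁ : star u * u = 1) (hu₂ : u * star u = 1)
    (ε₀ : ℝ) (hε₀ : 0 < ε₀)
    (φ : ℝ → (A →ₗ[ℂ] ℂ)) (h : ℝ → A)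
    (hstate : ∀ s ∈ Set.Icc (0 : ℝ) 1,
      φ s 1 = 1 ∧ ∀ a : A, 0 ≤ φ s (star a * a))
    (hgap : ∀ s ∈ Set.Icc (0 : ℝ) 1, ∀ v : A, φ s v = 0 →
      ε₀ * ((φ s) (star v * v)).re ≤ ((φ s) (star v * (h s * v - v * h s))).re)
    (hreal : ∀ s ∈ Set.Icc (0 : ℝ) 1, ((φ s) u).im = 0)
    (hsmall : ∀ s ∈ Set.Icc (0 : ℝ) 1,
      ((φ s) (star u * (h s * u - u * h s))).re < ε₀)
    (hcont : ContinuousOn (fun s => (φ s) u) (Set.Icc (0 : ℝ) 1)) :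
    0 < ((φ 0) u).re * ((φ 1) u).re := by
  have hne : ∀ s ∈ Set.Icc (0 : ℝ) 1, ((φ s) u).re ≠ 0 := by
    intro s hs hre
    have hz : (φ s) u = 0 := Complex.ext hre (hreal s hs)
    have := hgap s hs u hz
    rw [hu₁, (hstate s hs).1] at this
    simp at this
    exact absurd (hsmall s hs) (not_lt.mpr this)
  have hfc : ContinuousOn (fun s => ((φ s) u).re) (Set.Icc (0 : ℝ) 1) :=
    Complex.continuous_re.comp_continuousOn hcont
  have h0 : (0 : ℝ) ∈ Set.Icc (0 : ℝ) 1 := by constructor <;> norm_num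
  have h1 : (1 : ℝ) ∈ Set.Icc (0 : ℝ) 1 := by constructor <;> norm_num
  rcases (hne 0 h0).lt_or_gt with hn0 | hp0 <;>
    rcases (hne 1 h1).lt_or_gt with hn1 | hp1
  · exact mul_pos_of_neg_of_neg hn0 hn1
  · exfalso
    have : (0 : ℝ) ∈ Set.Icc (((φ 0) u).re) (((φ 1) u).re) :=
      ⟨le_of_lt hn0, le_of_lt hp1⟩
    obtain ⟨c, hc, hc0⟩ := intermediate_value_Icc (by norm_num : (0:ℝ) ≤ 1) hfc this
    exact hne c hc hc0
  · exfalso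
    have : (0 : ℝ) ∈ Set.Icc (((φ 1) u).re) (((φ 0) u).re) :=
      ⟨le_of_lt hn1, le_of_lt hp0⟩
    obtain ⟨c, hc, hc0⟩ := intermediate_value_Icc' (by norm_num : (0:ℝ) ≤ 1) hfc this
    exact hne c hc hc0
  · exact mul_pos hp0 hp1
end

section
/- Let A be a unital C*-algebra, φ : A → ℂ a state, h ∈ A, and ε > 0, and assume the 'gap' condition: for every v ∈ A with φ(v) = 0, Re φ(v*·(h v − v h)) ≥ ε·Re φ(v* v). Let u : [0,1] → A be a continuous path such that u(α) is unitary for every α, u(0) = 1, φ(u(α)) is real for every α, and Re φ(u(α)*·(h u(α) − u(α) h)) < ε for every α. Then φ(u(1)) > 0. -/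
open ComplexOrder

section Aux

variable {A : Type*} [NormedRing A] [StarRing A] [CStarRing A] [CompleteSpace A]
    [NormedAlgebra ℂ A] [StarModule ℂ A]

/-- A positive linear functional is nonnegative on differences along the order. -/
lemma aux_phi_nonneg_of_le (φ : A →ₗ[ℂ] ℂ) (hφpos : ∀ a : A, 0 ≤ φ (star a * a))
    [PartialOrder A] [StarOrderedRing A] {x y : A} (hxy : x ≤ y) :
    0 ≤ φ (y - x) := by
  rw [StarOrderedRing.le_iff] at hxy
  obtain ⟨p, hp, rfl⟩ := hxy
  simp only [add_sub_cancel_left]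
  induction hp using AddSubmonoid.closure_induction with
  | mem s hs => obtain ⟨s, rfl⟩ := hs; exact hφpos s
  | zero => simpa using le_refl (0 : ℂ)
  | add a b _ _ ha hb => rw [map_add]; exact add_nonneg ha hb

end Aux

/-- Continuity-from-the-identity argument. If `φ` is a state satisfying the
gap condition with gap `ε` for `h`, and `u : [0,1] → A` is a continuous path of unitaries
with `u 0 = 1`, `φ(u α)` real, and `Re φ(u(α)* [h, u(α)]) < ε` for all `α`, then
`φ(u 1) > 0`. -/
theorem expectation_positive_along_path
    {A : Type*} [NormedRing A] [StarRing A] [CStarRing A] [CompleteSpace A]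
    [NormedAlgebra ℂ A] [StarModule ℂ A]
    (φ : A →ₗ[ℂ] ℂ) (hφ1 : φ 1 = 1) (hφpos : ∀ a : A, 0 ≤ φ (star a * a))
    (h : A) (ε : ℝ) (hε : 0 < ε)
    (hgap : ∀ v : A, φ v = 0 →
      ε * (φ (star v * v)).re ≤ (φ (star v * (h * v - v * h))).re)
    (u : ℝ → A) (hu_cont : ContinuousOn u (Set.Icc (0 : ℝ) 1))
    (hu_unitary : ∀ α ∈ Set.Icc (0 : ℝ) 1, star (u α) * u α = 1 ∧ u α * star (u α) = 1)
    (hu0 : u 0 = 1)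
    (hreal : ∀ α ∈ Set.Icc (0 : ℝ) 1, (φ (u α)).im = 0)
    (hsmall : ∀ α ∈ Set.Icc (0 : ℝ) 1,
      (φ (star (u α) * (h * u α - u α * h))).re < ε) :
    0 < (φ (u 1)).re := by
  letI : CStarAlgebra A := ⟨⟩
  letI : PartialOrder A := CStarAlgebra.spectralOrder A
  letI : StarOrderedRing A := CStarAlgebra.spectralOrderedRing A
  -- Step 1: φ is bounded on selfadjoint elements.
  have hsa : ∀ x : A, IsSelfAdjoint x → ‖φ x‖ ≤ ‖x‖ := by
    intro x hx
    have h1 : 0 ≤ φ (algebraMap ℝ A ‖x‖ - x) :=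
      aux_phi_nonneg_of_le φ hφpos hx.le_algebraMap_norm_self
    have h2 : 0 ≤ φ (x - (-(algebraMap ℝ A ‖x‖))) :=
      aux_phi_nonneg_of_le φ hφpos hx.neg_algebraMap_norm_le_self
    have halg : φ (algebraMap ℝ A ‖x‖) = (‖x‖ : ℂ) := by
      rw [Algebra.algebraMap_eq_smul_one, LinearMap.map_smul_of_tower, hφ1]
      simp [Complex.real_smul]
    rw [map_sub, halg] at h1
    rw [map_sub, map_neg, halg, sub_neg_eq_add] at h2
    rw [Complex.le_def] at h1 h2
    simp only [Complex.zero_re, Complex.zero_im, Complex.sub_re, Complex.sub_im,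
      Complex.add_re, Complex.add_im, Complex.ofReal_re, Complex.ofReal_im] at h1 h2
    have him : (φ x).im = 0 := by linarith [h1.2, h2.2]
    have hxre : φ x = ((φ x).re : ℂ) := Complex.ext rfl (by simpa using him)
    rw [hxre, Complex.norm_real, Real.norm_eq_abs, abs_le]
    constructor <;> [linarith [h2.1]; linarith [h1.1]]
  -- Step 2: φ is bounded, hence continuous.
  have hbound : ∀ a : A, ‖φ a‖ ≤ 2 * ‖a‖ := by
    intro a
    obtain ⟨x, hxdef⟩ : ∃ x : A, x = a + star a := ⟨_, rfl⟩
    obtain ⟨y, hydef⟩ : ∃ y : A, y = Complex.I • (star a - a) := ⟨_, rfl⟩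
    have hxsa : IsSelfAdjoint x := by
      simp [IsSelfAdjoint, hxdef, star_add, add_comm]
    have hysa : IsSelfAdjoint y := by
      simp only [IsSelfAdjoint, hydef, star_smul, star_sub, star_star, Complex.star_def,
        Complex.conj_I, neg_smul, smul_sub]
      abel
    have hxy : x + Complex.I • y = (2 : ℂ) • a := by
      rw [hydef, hxdef, smul_smul, Complex.I_mul_I, neg_one_smul, neg_sub, two_smul]
      abel
    have key : φ a = (2⁻¹ : ℂ) * (φ x + Complex.I * φ y) := by
      have h2 : φ x + Complex.I * φ y = 2 * φ a := by
        calc φ x + Complex.I * φ y = φ (x + Complex.I • y) := by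
              rw [map_add, map_smul, smul_eq_mul]
          _ = φ ((2 : ℂ) • a) := by rw [hxy]
          _ = 2 * φ a := by rw [map_smul, smul_eq_mul]
      rw [h2]; ring
    rw [key]
    have hxn : ‖x‖ ≤ 2 * ‖a‖ := by
      rw [hxdef]
      calc ‖a + star a‖ ≤ ‖a‖ + ‖star a‖ := norm_add_le _ _
        _ = 2 * ‖a‖ := by rw [norm_star]; ring
    have hyn : ‖y‖ ≤ 2 * ‖a‖ := by
      rw [hydef]
      rw [norm_smul, Complex.norm_I, one_mul]
      calc ‖star a - a‖ ≤ ‖star a‖ + ‖a‖ := norm_sub_le _ _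
        _ = 2 * ‖a‖ := by rw [norm_star]; ring
    calc ‖(2⁻¹ : ℂ) * (φ x + Complex.I * φ y)‖
        = 2⁻¹ * ‖φ x + Complex.I * φ y‖ := by
          rw [norm_mul]; norm_num
      _ ≤ 2⁻¹ * (‖φ x‖ + ‖Complex.I * φ y‖) := by
          gcongr; exact norm_add_le _ _
      _ = 2⁻¹ * (‖φ x‖ + ‖φ y‖) := by rw [norm_mul, Complex.norm_I, one_mul]
      _ ≤ 2⁻¹ * (2 * ‖a‖ + 2 * ‖a‖) := by
          gcongr
          · exact (hsa x hxsa).trans hxn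
          · exact (hsa y hysa).trans hyn
      _ = 2 * ‖a‖ := by ring
  have hφcont : Continuous fun a : A => φ a := by
    have := (φ.mkContinuous 2 hbound).continuous
    exact this
  -- Step 3: f α = Re φ(u α) never vanishes on [0,1].
  set f : ℝ → ℝ := fun α => (φ (u α)).re with hf
  have hfcont : ContinuousOn f (Set.Icc (0 : ℝ) 1) :=
    (Complex.continuous_re.comp hφcont).comp_continuousOn hu_cont
  have hne : ∀ α ∈ Set.Icc (0 : ℝ) 1, f α ≠ 0 := by
    intro α hα h0
    have hzero : φ (u α) = 0 := Complex.ext h0 (by simpa using hreal α hα)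
    have := hgap (u α) hzero
    rw [(hu_unitary α hα).1, hφ1] at this
    simp only [Complex.one_re, mul_one] at this
    exact absurd (lt_of_le_of_lt this (hsmall α hα)) (lt_irrefl ε)
  -- Step 4: intermediate value theorem.
  have hf0 : f 0 = 1 := by simp [hf, hu0, hφ1]
  by_contra hcon
  push_neg at hcon
  have h1mem : (1 : ℝ) ∈ Set.Icc (0 : ℝ) 1 := by norm_num
  have hflt : f 1 < 0 := lt_of_le_of_ne hcon (hne 1 h1mem)
  have hsub := intermediate_value_Icc' (by norm_num : (0:ℝ) ≤ 1) hfcont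
  have h0mem : (0 : ℝ) ∈ Set.Icc (f 1) (f 0) := ⟨hflt.le, by rw [hf0]; norm_num⟩
  obtain ⟨α, hα, hfα⟩ := hsub h0mem
  exact hne α hα hfα
end

section
/- Let E be a nonzero finite-dimensional complex inner product space, H : E → E a self-adjoint linear map, and Φ ∈ E with ‖Φ‖ = 1. Then the following are equivalent: (i) for every linear map V : E → E, Re⟨Φ, V†(H V − V H)Φ⟩ ≥ 0, where V† denotes the adjoint of V; (ii) Re⟨Φ, HΦ⟩ ≤ Re⟨ψ, Hψ⟩ for every ψ ∈ E with ‖ψ‖ = 1 (i.e., Φ minimizes the energy, equivalently Φ is an eigenvector of H with smallest eigenvalue). -/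
private lemma quad_nonneg_zero (a b : ℝ) (ha : 0 ≤ a) (hb : 0 ≤ b)
    (h : ∀ t : ℝ, 0 ≤ 2 * t * a + t ^ 2 * b) : a = 0 := by
  have hb1 : 0 < b + 1 := by linarith
  set c := a / (b + 1) with hc
  have hac : a = c * (b + 1) := by rw [hc, div_mul_cancel₀ _ hb1.ne']
  have h1 := h (-c)
  have hc2 : c ^ 2 = 0 := le_antisymm (by nlinarith [sq_nonneg c]) (sq_nonneg c)
  have : c = 0 := by
    have := sq_nonneg c
    nlinarith [sq_abs c, abs_nonneg c]
  rw [hac, this, zero_mul]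

/-- For a finite-dimensional complex inner ℂ product space, a self-adjoint `H`,
and a unit vector `Φ`, the ground-state condition `Re⟨Φ, V†(HV - VH)Φ⟩ ≥ 0` for all linear
maps `V` is equivalent to the variational characterization that `Φ` minimizes the energy. -/
theorem ground_state_iff_variational
    {E : Type*} [NormedAddCommGroup E] [InnerProductSpace ℂ E]
    [FiniteDimensional ℂ E] [Nontrivial E]
    (H : E →ₗ[ℂ] E) (hH : ∀ x y : E, (inner ℂ x (H y) : ℂ) = inner ℂ (H x) y)
    (Φ : E) (hΦ : ‖Φ‖ = 1) :
    (∀ V : E →ₗ[ℂ] E,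
        0 ≤ ((inner ℂ Φ ((LinearMap.adjoint V) (H (V Φ) - V (H Φ))) : ℂ)).re)
      ↔ (∀ ψ : E, ‖ψ‖ = 1 → ((inner ℂ Φ (H Φ) : ℂ)).re ≤ ((inner ℂ ψ (H ψ) : ℂ)).re) := by
  have reK : ∀ (r : ℝ) (y : E), (((r : ℂ)) * (inner ℂ y y : ℂ)).re = r * ‖y‖ ^ 2 := by
    intro r y
    rw [inner_self_eq_norm_sq_to_K]
    show (((r : ℂ)) * (((‖y‖ : ℝ) : ℂ)) ^ 2).re = r * ‖y‖ ^ 2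
    norm_cast
  have selfre : ∀ y : E, ((inner ℂ y y : ℂ)).re = ‖y‖ ^ 2 := by
    intro y
    rw [inner_self_eq_norm_sq_to_K]
    show ((((‖y‖ : ℝ) : ℂ)) ^ 2).re = ‖y‖ ^ 2
    norm_cast
  have selfim : ∀ y : E, ((inner ℂ y y : ℂ)).im = 0 := by
    intro y
    rw [inner_self_eq_norm_sq_to_K]
    show ((((‖y‖ : ℝ) : ℂ)) ^ 2).im = 0
    norm_cast
  have hΦΦ : (inner ℂ Φ Φ : ℂ) = 1 := by
    rw [inner_self_eq_norm_sq_to_K, hΦ]; norm_num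
  constructor
  · intro h ψ hψ
    set V : E →ₗ[ℂ] E := (innerSL ℂ Φ).toLinearMap.smulRight ψ with hVdef
    have hVx : ∀ x : E, V x = (inner ℂ Φ x : ℂ) • ψ := fun x => rfl
    have hψψ : (inner ℂ ψ ψ : ℂ) = 1 := by
      rw [inner_self_eq_norm_sq_to_K, hψ]; norm_num
    have h1 := h V
    rw [LinearMap.adjoint_inner_right] at h1
    have hVΦ : V Φ = ψ := by rw [hVx, hΦΦ, one_smul]
    rw [hVΦ, hVx, inner_sub_right, inner_smul_right, hψψ, mul_one, Complex.sub_re] at h1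
    linarith
  · intro h V
    set lam := ((inner ℂ Φ (H Φ) : ℂ)).re with hlam
    -- global variational bound
    have hbound : ∀ x : E, lam * ‖x‖ ^ 2 ≤ ((inner ℂ x (H x) : ℂ)).re := by
      intro x
      rcases eq_or_ne x 0 with rfl | hx
      · simp
      · have hn : (0:ℝ) < ‖x‖ := norm_pos_iff.mpr hx
        have hu : ‖((‖x‖:ℂ))⁻¹ • x‖ = 1 := by
          rw [norm_smul]
          simp [hn.ne']
        have h2 := h _ hu
        have hre : ((inner ℂ (((‖x‖:ℂ))⁻¹ • x) (H (((‖x‖:ℂ))⁻¹ • x)) : ℂ)).re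
            = (‖x‖ ^ 2)⁻¹ * ((inner ℂ x (H x) : ℂ)).re := by
          rw [map_smul, inner_smul_left, inner_smul_right, map_inv₀, Complex.conj_ofReal,
            ← mul_assoc]
          have e : ((‖x‖:ℂ))⁻¹ * ((‖x‖:ℂ))⁻¹ = (((((‖x‖ ^ 2)⁻¹ : ℝ)) : ℂ)) := by
            push_cast
            ring
          rw [e, Complex.re_ofReal_mul]
        rw [hre] at h2
        have hx2 : (0:ℝ) < ‖x‖ ^ 2 := by positivity
        have := mul_le_mul_of_nonneg_right h2 hx2.le
        calc lam * ‖x‖ ^ 2 ≤ ((‖x‖ ^ 2)⁻¹ * ((inner ℂ x (H x) : ℂ)).re) * ‖x‖ ^ 2 := this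
          _ = ((inner ℂ x (H x) : ℂ)).re := by field_simp
    -- the shifted operator T = H - lam • id
    set T : E →ₗ[ℂ] E := H - (lam : ℂ) • LinearMap.id with hTdef
    have hTx : ∀ x : E, T x = H x - (lam : ℂ) • x := fun x => rfl
    have hTsym : ∀ x y : E, (inner ℂ x (T y) : ℂ) = inner ℂ (T x) y := by
      intro x y
      rw [hTx, hTx, inner_sub_right, inner_sub_left, hH, inner_smul_right, inner_smul_left,
        Complex.conj_ofReal]
    have hTpos : ∀ x : E, 0 ≤ ((inner ℂ x (T x) : ℂ)).re := by
      intro x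
      rw [hTx, inner_sub_right, inner_smul_right, Complex.sub_re, reK]
      linarith [hbound x]
    -- Φ is an eigenvector: T Φ = 0
    have hTΦre : ((inner ℂ Φ (T Φ) : ℂ)).re = 0 := by
      rw [hTx, inner_sub_right, inner_smul_right, hΦΦ, mul_one, Complex.sub_re]
      simp [hlam]
    have hTΦ : T Φ = 0 := by
      set u := T Φ with hu
      have key : ∀ t : ℝ, 0 ≤ 2 * t * (‖u‖ ^ 2) + t ^ 2 * ((inner ℂ u (T u) : ℂ)).re := by
        intro t
        have h4 := hTpos (Φ + (t : ℂ) • u)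
        rw [map_add, map_smul, inner_add_left, inner_add_right, inner_add_right,
          inner_smul_left, inner_smul_right, inner_smul_left, inner_smul_right,
          Complex.conj_ofReal] at h4
        have e1 : (inner ℂ Φ (T u) : ℂ) = inner ℂ u u := by rw [hTsym]
        have e2 : (inner ℂ u (T Φ) : ℂ) = inner ℂ u u := rfl
        rw [e1, e2] at h4
        simp only [Complex.add_re, Complex.mul_re, Complex.ofReal_re, Complex.ofReal_im,
          zero_mul, sub_zero] at h4
        rw [selfre u] at h4
        nlinarith [h4, hTΦre]
      have ha := quad_nonneg_zero (‖u‖ ^ 2) ((inner ℂ u (T u) : ℂ)).re (by positivity)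
        (hTpos u) key
      have : ‖u‖ = 0 := by nlinarith [norm_nonneg u]
      exact norm_eq_zero.mp this
    have hHΦ : H Φ = (lam : ℂ) • Φ := by
      have h5 := hTΦ
      rw [hTx] at h5
      exact sub_eq_zero.mp h5
    -- conclude for arbitrary V
    have h6 := hbound (V Φ)
    rw [LinearMap.adjoint_inner_right, inner_sub_right, hHΦ, map_smul, inner_smul_right,
      Complex.sub_re, reK]
    linarith
end

section
/- Let 𝓗 be a complex Hilbert space, H a bounded self-adjoint operator on 𝓗, Φ ∈ 𝓗 a unit vector, E₀ ∈ ℝ with HΦ = E₀·Φ, and ε > 0. Then the following are equivalent: (i) for every bounded operator V on 𝓗 with ⟨Φ, VΦ⟩ = 0, one has Re⟨Φ, V*(H V − V H)Φ⟩ ≥ ε·‖VΦ‖²; (ii) for every ψ ∈ 𝓗 with ⟨Φ, ψ⟩ = 0, one has Re⟨ψ, Hψ⟩ ≥ (E₀ + ε)·‖ψ‖². -/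
/-- For a bounded self-adjoint operator `H` on a complex Hilbert space, a unit
eigenvector `Φ` with eigenvalue `E₀`, and `ε > 0`, the local-gap condition
`Re⟨Φ, V*(HV - VH)Φ⟩ ≥ ε ‖VΦ‖²` for all bounded `V` with `⟨Φ, VΦ⟩ = 0` is equivalent to the
spectral-gap condition `Re⟨ψ, Hψ⟩ ≥ (E₀ + ε) ‖ψ‖²` for all `ψ ⊥ Φ`. -/
theorem locally_unique_gapped_iff_spectral_gap
    {𝓗 : Type*} [NormedAddCommGroup 𝓗] [InnerProductSpace ℂ 𝓗] [CompleteSpace 𝓗]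
    (H : 𝓗 →L[ℂ] 𝓗) (hH : IsSelfAdjoint H)
    (Φ : 𝓗) (hΦ : ‖Φ‖ = 1) (E₀ : ℝ) (hEig : H Φ = (E₀ : ℂ) • Φ)
    (ε : ℝ) (hε : 0 < ε) :
    (∀ V : 𝓗 →L[ℂ] 𝓗, (inner ℂ Φ (V Φ) : ℂ) = 0 →
        ε * ‖V Φ‖ ^ 2
          ≤ ((inner ℂ Φ ((ContinuousLinearMap.adjoint V) (H (V Φ) - V (H Φ))) : ℂ)).re)
      ↔ (∀ ψ : 𝓗, (inner ℂ Φ ψ : ℂ) = 0 →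
          (E₀ + ε) * ‖ψ‖ ^ 2 ≤ ((inner ℂ ψ (H ψ) : ℂ)).re) := by
  have key : ∀ V : 𝓗 →L[ℂ] 𝓗,
      ((inner ℂ Φ ((ContinuousLinearMap.adjoint V) (H (V Φ) - V (H Φ))) : ℂ)).re
        = ((inner ℂ (V Φ) (H (V Φ)) : ℂ)).re - E₀ * ‖V Φ‖ ^ 2 := by
    intro V
    rw [ContinuousLinearMap.adjoint_inner_right, inner_sub_right, hEig, map_smul,
      inner_smul_right, @inner_self_eq_norm_sq_to_K ℂ]
    push_cast
    simp [Complex.mul_re]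
    left; norm_cast
  constructor
  · intro h ψ hψ
    set V : 𝓗 →L[ℂ] 𝓗 := (innerSL ℂ Φ).smulRight ψ with hVdef
    have hVΦ : V Φ = ψ := by
      simp [hVdef, @inner_self_eq_norm_sq_to_K ℂ, hΦ]
    have h1 := h V (by rw [hVΦ]; exact hψ)
    rw [key V, hVΦ] at h1
    linarith
  · intro h V hV
    have h1 := h (V Φ) hV
    rw [key V]
    linarith
end
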